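/- arXiv:1512.02716 — 4 statements merged into one kernel-verified Lean document; each statement's English description precedes it below -/
import Mathlib

section
/- (d'Ocagne's identity for Horadam numbers) For all natural numbers n, r: W_{n+r} · W_{n+1} − W_{n+r+1} · W_n = (−1)^n · q^n · W_r. -/
def W (p q : ℝ) : ℕ → ℝ
  | 0 => 0
  | 1 => 1
  | n + 2 => p * W p q (n + 1) + q * W p q n

theorem stmt_3 (p q : ℝ) (hp : 0 < p) (hq : 0 < q) :
    ∀ n r : ℕ,
      W p q (n + r) * W p q (n + 1) - W p q (n + r + 1) * W p q n =
        (-1) ^ n * q ^ n * W p q r := by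
  intro n
  induction n with
  | zero => intro r; simp [W]
  | succ n ih =>
    intro r
    have h1 : n + 1 + r = (n + r) + 1 := by ring
    have h2 : n + 1 + r + 1 = (n + r) + 2 := by ring
    have h3 : n + 1 + 1 = n + 2 := rfl
    rw [h1]
    show W p q (n + r + 1) * W p q (n + 2) - W p q (n + r + 2) * W p q (n + 1) = _
    rw [show W p q (n + 2) = p * W p q (n + 1) + q * W p q n from rfl,
        show W p q (n + r + 2) = p * W p q (n + r + 1) + q * W p q (n + r) from rfl]
    have := ih r
    linear_combination (-q) * ih r
end

section
/- If x_{n+1} = q/(p + x_n) for all n ≥ 0 and the denominators W_{n+1} + x_0·W_n never vanish, then x_n = (q·W_n + x_0·q·W_{n−1})/(W_{n+1} + x_0·W_n) for all n ≥ 1. -/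
/-!
Iterating `x ↦ q / (p + x)` is a Möbius map, so it acts on ratios of solutions of the linear
recurrence `A (n + 2) = p * A (n + 1) + q * A n`: if `x = q * a / b` then
`q / (p + x) = q * b / (p * b + q * a)`. The solution with `A 0 = 1`, `A 1 = p + x 0` is
`A n = W (n + 1) + x 0 * W n`, whose shift `A (n - 1)` is the numerator of the claimed formula.
-/

section Riccati

variable {K : Type*} [Field K] {p q : K}

theorem div_add_mul_div_eq {a b : K} (hb : b ≠ 0) :
    q / (p + q * a / b) = q * b / (p * b + q * a) := by
  rw [add_div' _ _ _ hb, div_div_eq_mul_div]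

theorem eq_mul_div_of_linear_recurrence {x A : ℕ → K}
    (hrec : ∀ n, x (n + 1) = q / (p + x n))
    (hA : ∀ n, A (n + 2) = p * A (n + 1) + q * A n) (hA_ne : ∀ n, A (n + 1) ≠ 0)
    (h₁ : x 1 = q * A 0 / A 1) : ∀ n, x (n + 1) = q * A n / A (n + 1)
  | 0 => h₁
  | n + 1 => by
    rw [hrec, eq_mul_div_of_linear_recurrence hrec hA hA_ne h₁ n, div_add_mul_div_eq (hA_ne n),
      hA]

end Riccati

theorem W_add_two (p q : ℝ) (n : ℕ) : W p q (n + 2) = p * W p q (n + 1) + q * W p q n := rfl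

theorem W_succ_add_mul_W_recurrence (p q c : ℝ) (n : ℕ) :
    W p q (n + 3) + c * W p q (n + 2) =
      p * (W p q (n + 2) + c * W p q (n + 1)) + q * (W p q (n + 1) + c * W p q n) := by
  rw [W_add_two p q (n + 1), W_add_two p q n]
  ring

theorem stmt_5_general (p q : ℝ) (x : ℕ → ℝ)
    (hrec : ∀ n : ℕ, x (n + 1) = q / (p + x n))
    (hden : ∀ n : ℕ, W p q (n + 1) + x 0 * W p q n ≠ 0) :
    ∀ n : ℕ, 1 ≤ n →
      x n = (q * W p q n + x 0 * q * W p q (n - 1)) / (W p q (n + 1) + x 0 * W p q n) := by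
  intro n hn
  obtain ⟨m, rfl⟩ := Nat.exists_eq_add_of_le' hn
  have h₁ : x 1 = q * (W p q 1 + x 0 * W p q 0) / (W p q 2 + x 0 * W p q 1) := by
    simp [hrec 0, W]
  rw [eq_mul_div_of_linear_recurrence (A := fun n ↦ W p q (n + 1) + x 0 * W p q n) hrec
    (W_succ_add_mul_W_recurrence p q (x 0) ·) (hden <| · + 1) h₁ m, Nat.add_sub_cancel]
  ring

theorem stmt_5 (p q : ℝ) (hp : 0 < p) (hq : 0 < q) (x : ℕ → ℝ)
    (hrec : ∀ n : ℕ, x (n + 1) = q / (p + x n))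
    (hden : ∀ n : ℕ, W p q (n + 1) + x 0 * W p q n ≠ 0) :
    ∀ n : ℕ, 1 ≤ n →
      x n = (q * W p q n + x 0 * q * W p q (n - 1)) / (W p q (n + 1) + x 0 * W p q n) :=
  stmt_5_general p q x hrec hden
end

section
/- If y_{n+1} = q/(−p + y_n) for all n ≥ 0 and all denominators are nonzero, then y_n = (q·W_{−n} + y_0·q·W_{−(n−1)})/(W_{−(n+1)} + y_0·W_{−n}) for all n ≥ 1, where W_{−m} = (−1)^{m+1}·W_m. -/
noncomputable def Wneg (p q : ℝ) (m : ℕ) : ℝ := (-1 : ℝ) ^ (m + 1) * W p q m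

/-!
The map `y ↦ q / (-p + y)` is the Möbius transformation of the matrix `[[0, q], [1, -p]]`, so its
iterates are quotients of solutions of `D (n + 2) = -p * D (n + 1) + q * D n`. Precisely, with
`D n = W₋(n+1) + y₀ W₋n` one has `-p + y n = D (n + 1) / D n`, hence `y (n + 1) = q * D n / D (n + 1)`,
and `q * D n` is the numerator of the claimed formula.
-/

section Mobius

variable {K : Type*} [Field K] {p q : K} {y D : ℕ → K}

theorem neg_add_eq_div_of_recurrence (hy : ∀ n, y (n + 1) = q / (-p + y n))
    (hD : ∀ n, D (n + 2) = -p * D (n + 1) + q * D n) (hD_ne : ∀ n, D n ≠ 0)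
    (h₀ : -p + y 0 = D 1 / D 0) (n : ℕ) : -p + y n = D (n + 1) / D n := by
  induction n with
  | zero => exact h₀
  | succ n ih =>
    rw [hy, ih, hD]
    field_simp [hD_ne n, hD_ne (n + 1)]

theorem eq_mul_div_of_recurrence (hy : ∀ n, y (n + 1) = q / (-p + y n))
    (hD : ∀ n, D (n + 2) = -p * D (n + 1) + q * D n) (hD_ne : ∀ n, D n ≠ 0)
    (h₀ : -p + y 0 = D 1 / D 0) (n : ℕ) : y (n + 1) = q * D n / D (n + 1) := by
  rw [hy, neg_add_eq_div_of_recurrence hy hD hD_ne h₀, div_div_eq_mul_div]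

end Mobius

@[simp]
theorem Wneg_zero (p q : ℝ) : Wneg p q 0 = 0 := by
  simp [Wneg, W]

@[simp]
theorem Wneg_one (p q : ℝ) : Wneg p q 1 = 1 := by
  simp [Wneg, W]

theorem Wneg_add_two (p q : ℝ) (n : ℕ) :
    Wneg p q (n + 2) = -p * Wneg p q (n + 1) + q * Wneg p q n := by
  simp only [Wneg, W]
  ring

theorem stmt_6_general (p q : ℝ) (y : ℕ → ℝ)
    (hrec : ∀ n : ℕ, y (n + 1) = q / (-p + y n))
    (hden : ∀ n : ℕ, Wneg p q (n + 1) + y 0 * Wneg p q n ≠ 0) :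
    ∀ n : ℕ, 1 ≤ n →
      y n = (q * Wneg p q n + y 0 * q * Wneg p q (n - 1)) /
        (Wneg p q (n + 1) + y 0 * Wneg p q n) := by
  set D : ℕ → ℝ := fun n ↦ Wneg p q (n + 1) + y 0 * Wneg p q n with hD_def
  have hD : ∀ n, D (n + 2) = -p * D (n + 1) + q * D n := fun n ↦ by
    simp only [hD_def, Wneg_add_two]
    ring
  have h₀ : -p + y 0 = D 1 / D 0 := by
    simp [hD_def, Wneg_add_two]
  rintro n hn
  obtain ⟨m, rfl⟩ := Nat.exists_eq_add_of_le' hn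
  rw [eq_mul_div_of_recurrence hrec hD hden h₀ m]
  simp only [hD_def, Nat.add_sub_cancel]
  ring

theorem stmt_6 (p q : ℝ) (hp : 0 < p) (hq : 0 < q) (y : ℕ → ℝ)
    (hrec : ∀ n : ℕ, y (n + 1) = q / (-p + y n))
    (hne : ∀ n : ℕ, -p + y n ≠ 0)
    (hden : ∀ n : ℕ, Wneg p q (n + 1) + y 0 * Wneg p q n ≠ 0) :
    ∀ n : ℕ, 1 ≤ n →
      y n = (q * Wneg p q n + y 0 * q * Wneg p q (n - 1)) /
        (Wneg p q (n + 1) + y 0 * Wneg p q n) :=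
  stmt_6_general p q y hrec hden
end

section
/- If p = q − 1 (p, q > 0) and x_0 ≠ −Φ₊, then the partial products of the solution of x_{n+1} = q/(p + x_n) satisfy ∏_{i=0}^n x_i → x_0·√(p²+4q)/(Φ₊ + x_0) as n → ∞, where Φ₊ = (p + √(p²+4q))/2. -/
/-!
With `d n = ∏_{i<n} (p + x i)` the recurrence telescopes to
`(∏_{i≤n} x i) * d n = x 0 * q ^ n`, and `d` solves the linear recurrence `d (n + 2) = p d (n + 1) + q d n`, whose characteristic roots
are `q` and `-1` when `p = q - 1`. Hence `d n / q ^ n → (q + x 0) / (q + 1)`, and the partial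
products tend to `x 0 * (q + 1) / (q + x 0)`; here `√(p ^ 2 + 4 q) = q + 1` and `Φ₊ = q`.
-/

open Filter Topology Finset

section RiccatiProduct

variable {K : Type*} [Field K] {p q : K} {x : ℕ → K}

theorem prod_range_succ_mul_prod_add (hrec : ∀ n, x (n + 1) = q / (p + x n))
    (hne : ∀ n, p + x n ≠ 0) (n : ℕ) :
    (∏ i ∈ range (n + 1), x i) * ∏ i ∈ range n, (p + x i) = x 0 * q ^ n := by
  have hstep : ∀ i, x (i + 1) * (p + x i) = q := fun i => by
    rw [hrec i, div_mul_cancel₀ _ (hne i)]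
  rw [prod_range_succ', mul_right_comm, ← prod_mul_distrib, prod_congr rfl fun i _ => hstep i,
    prod_const, card_range, mul_comm]

theorem prod_range_add_two_add (hrec : ∀ n, x (n + 1) = q / (p + x n))
    (hne : ∀ n, p + x n ≠ 0) (n : ℕ) :
    ∏ i ∈ range (n + 2), (p + x i) =
      p * ∏ i ∈ range (n + 1), (p + x i) + q * ∏ i ∈ range n, (p + x i) := by
  rw [prod_range_succ _ (n + 1), prod_range_succ _ n, hrec n]
  field_simp [hne n]

end RiccatiProduct

section LinearRecurrence

variable {R : Type*} [CommRing R] {a b : R} {d : ℕ → R}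

theorem sub_mul_eq_pow_mul_of_recurrence
    (hd : ∀ n, d (n + 2) = (a + b) * d (n + 1) - a * b * d n) (n : ℕ) :
    d (n + 1) - b * d n = a ^ n * (d 1 - b * d 0) := by
  induction n with
  | zero => simp
  | succ n ih => linear_combination hd n + a * ih

theorem sub_mul_eq_of_recurrence
    (hd : ∀ n, d (n + 2) = (a + b) * d (n + 1) - a * b * d n) (n : ℕ) :
    (a - b) * d n = a ^ n * (d 1 - b * d 0) - b ^ n * (d 1 - a * d 0) := by
  have hd' : ∀ n, d (n + 2) = (b + a) * d (n + 1) - b * a * d n := fun n => by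
    rw [hd n]; ring
  linear_combination sub_mul_eq_pow_mul_of_recurrence hd n -
    sub_mul_eq_pow_mul_of_recurrence hd' n

end LinearRecurrence

theorem tendsto_div_pow_of_recurrence {a b : ℝ} {d : ℕ → ℝ}
    (hd : ∀ n, d (n + 2) = (a + b) * d (n + 1) - a * b * d n) (hab : |b| < |a|) :
    Tendsto (fun n => d n / a ^ n) atTop (𝓝 ((d 1 - b * d 0) / (a - b))) := by
  have ha : a ≠ 0 := abs_pos.mp ((abs_nonneg b).trans_lt hab)
  have hab' : a - b ≠ 0 := sub_ne_zero.mpr (by rintro rfl; exact lt_irrefl _ hab)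
  have hratio : |b / a| < 1 := by rwa [abs_div, div_lt_one (abs_pos.mpr ha)]
  have hclosed : ∀ n, d n / a ^ n = ((d 1 - b * d 0) - (b / a) ^ n * (d 1 - a * d 0)) / (a - b) :=
    fun n => by
      rw [div_pow, eq_div_iff hab', div_mul_eq_mul_div, mul_comm, sub_mul_eq_of_recurrence hd n]
      field_simp
  simp_rw [hclosed]
  simpa using (((tendsto_pow_atTop_nhds_zero_of_abs_lt_one hratio).mul_const
    (d 1 - a * d 0)).const_sub (d 1 - b * d 0)).div_const (a - b)

theorem stmt_12_general (p q : ℝ) (hp : 0 < p) (hpq : p = q - 1) (x : ℕ → ℝ)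
    (hrec : ∀ n : ℕ, x (n + 1) = q / (p + x n))
    (hne : ∀ n : ℕ, p + x n ≠ 0)
    (h0 : x 0 ≠ -((p + Real.sqrt (p ^ 2 + 4 * q)) / 2)) :
    Filter.Tendsto (fun n : ℕ => ∏ i ∈ Finset.range (n + 1), x i)
      Filter.atTop
      (nhds (x 0 * Real.sqrt (p ^ 2 + 4 * q) /
        ((p + Real.sqrt (p ^ 2 + 4 * q)) / 2 + x 0))) := by
  subst hpq
  have hsqrt : √((q - 1) ^ 2 + 4 * q) = q + 1 := by
    rw [show (q - 1) ^ 2 + 4 * q = (q + 1) ^ 2 by ring, Real.sqrt_sq (by linarith)]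
  rw [hsqrt] at h0 ⊢
  have hx0 : q + x 0 ≠ 0 := fun h => h0 (by linarith)
  set d : ℕ → ℝ := fun n => ∏ i ∈ range n, (q - 1 + x i)
  have hd : ∀ n, d (n + 2) = (q + -1) * d (n + 1) - q * -1 * d n := fun n => by
    simp only [d, prod_range_add_two_add hrec hne n]; ring
  have hlim : Tendsto (fun n => d n / q ^ n) atTop (𝓝 ((q + x 0) / (q + 1))) := by
    have hroots : |(-1 : ℝ)| < |q| := by
      rw [abs_neg, abs_one, abs_of_pos (by linarith)]
      linarith
    convert tendsto_div_pow_of_recurrence hd hroots using 2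
    simp only [d, range_one, prod_singleton, range_zero, prod_empty, mul_one, sub_neg_eq_add]
    ring
  have hprod : ∀ n, ∏ i ∈ range (n + 1), x i = x 0 / (d n / q ^ n) := fun n => by
    have hdn : d n ≠ 0 := prod_ne_zero_iff.mpr fun i _ => hne i
    rw [div_div_eq_mul_div, eq_div_iff hdn]
    exact prod_range_succ_mul_prod_add hrec hne n
  have hlimit : x 0 / ((q + x 0) / (q + 1)) = x 0 * (q + 1) / ((q - 1 + (q + 1)) / 2 + x 0) := by
    rw [div_div_eq_mul_div, show (q - 1 + (q + 1)) / 2 + x 0 = q + x 0 by ring]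
  rw [← hlimit]
  exact (tendsto_const_nhds.div hlim (div_ne_zero hx0 (by linarith))).congr fun n => (hprod n).symm

theorem stmt_12 (p q : ℝ) (hp : 0 < p) (hq : 0 < q) (hpq : p = q - 1) (x : ℕ → ℝ)
    (hrec : ∀ n : ℕ, x (n + 1) = q / (p + x n))
    (hne : ∀ n : ℕ, p + x n ≠ 0)
    (h0 : x 0 ≠ -((p + Real.sqrt (p ^ 2 + 4 * q)) / 2)) :
    Filter.Tendsto (fun n : ℕ => ∏ i ∈ Finset.range (n + 1), x i)
      Filter.atTop
      (nhds (x 0 * Real.sqrt (p ^ 2 + 4 * q) /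
        ((p + Real.sqrt (p ^ 2 + 4 * q)) / 2 + x 0))) :=
  stmt_12_general p q hp hpq x hrec hne h0
end
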